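/- arXiv:2007.06365 — 9 statements merged into one kernel-verified Lean document; each statement's English description precedes it below -/
import Mathlib

section
/- Let m ≥ 2 and n ≥ 1 be integers, let A be the (n+1)×(n+1) real matrix with rows and columns indexed by 0,…,n given by A 0 j = m−1 for 0 ≤ j ≤ n−1, A 0 n = 0, and for 1 ≤ i ≤ n: A i j = 1 if j = i−1 and A i j = 0 otherwise, and let W = (1/m)·A. Then the series ∑_{k=0}^∞ (W^k)_{n,0} converges and its sum equals 1. -/
/-!
The weight `x i = m ^ (n - i)` satisfies `W *ᵥ x = x - e₀`, so telescoping gives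
`∑ k < K, (W ^ k) n 0 = 1 - (W ^ K *ᵥ x) n`. It remains to see that `W ^ K *ᵥ x → 0`:
`W` is entrywise nonnegative and the same telescoping, together with
`(W ^ i *ᵥ e₀) i = m⁻¹ ^ i`, shows `W ^ (n + 1) *ᵥ x ≤ (1 - m⁻¹ ^ n) • x`, a geometric contraction.
-/

open Finset Filter Topology Matrix

namespace Matrix

variable {ι R : Type*} [Fintype ι]

section OrderedSemiring

variable [Semiring R] [PartialOrder R] [IsOrderedRing R] {M : Matrix ι ι R}

theorem mulVec_mono_of_nonneg (hM : ∀ i j, 0 ≤ M i j) {u v : ι → R} (huv : u ≤ v) :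
    M *ᵥ u ≤ M *ᵥ v :=
  fun i => dotProduct_le_dotProduct_of_nonneg_left huv (hM i)

theorem mulVec_nonneg_of_nonneg (hM : ∀ i j, 0 ≤ M i j) {v : ι → R} (hv : 0 ≤ v) :
    0 ≤ M *ᵥ v := by
  simpa using mulVec_mono_of_nonneg hM hv

theorem pow_nonneg_of_nonneg [DecidableEq ι] (hM : ∀ i j, 0 ≤ M i j) (k : ℕ) :
    ∀ i j, 0 ≤ (M ^ k) i j := by
  induction k with
  | zero => intro i j; by_cases h : i = j <;> simp [h]
  | succ k ih =>
    intro i j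
    rw [pow_succ, mul_apply]
    exact sum_nonneg fun l _ => mul_nonneg (ih i l) (hM l j)

theorem pow_mulVec_le_of_mulVec_le [DecidableEq ι] (hM : ∀ i j, 0 ≤ M i j) {x : ι → R}
    (hx : M *ᵥ x ≤ x) (k : ℕ) : M ^ k *ᵥ x ≤ x := by
  induction k with
  | zero => simp
  | succ k ih =>
    rw [pow_succ', ← mulVec_mulVec]
    exact (mulVec_mono_of_nonneg hM ih).trans hx

end OrderedSemiring

theorem sub_pow_mulVec_eq_sum [Ring R] [DecidableEq ι] {M : Matrix ι ι R} {x e : ι → R}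
    (hx : M *ᵥ x = x - e) (K : ℕ) :
    x - M ^ K *ᵥ x = ∑ k ∈ range K, M ^ k *ᵥ e := by
  induction K with
  | zero => simp
  | succ K ih =>
    rw [sum_range_succ, ← ih, pow_succ, ← mulVec_mulVec, hx, mulVec_sub]
    abel

section Real

variable [DecidableEq ι] {M : Matrix ι ι ℝ} {x : ι → ℝ} {N : ℕ} {r : ℝ}

theorem pow_mul_mulVec_le (hM : ∀ i j, 0 ≤ M i j) (hr : 0 ≤ r) (hN : M ^ N *ᵥ x ≤ r • x)
    (q : ℕ) : M ^ (N * q) *ᵥ x ≤ r ^ q • x := by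
  induction q with
  | zero => simp
  | succ q ih =>
    rw [mul_add_one, pow_add, ← mulVec_mulVec, pow_succ', ← smul_smul]
    calc M ^ (N * q) *ᵥ M ^ N *ᵥ x ≤ M ^ (N * q) *ᵥ (r • x) :=
          mulVec_mono_of_nonneg (pow_nonneg_of_nonneg hM _) hN
      _ = r • M ^ (N * q) *ᵥ x := mulVec_smul _ _ _
      _ ≤ r • r ^ q • x := smul_le_smul_of_nonneg_left ih hr

theorem pow_mulVec_le_pow_div (hM : ∀ i j, 0 ≤ M i j) (hr : 0 ≤ r) (hx : M *ᵥ x ≤ x)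
    (hN : M ^ N *ᵥ x ≤ r • x) (K : ℕ) : M ^ K *ᵥ x ≤ r ^ (K / N) • x := by
  conv_lhs => rw [← Nat.div_add_mod K N, pow_add, ← mulVec_mulVec]
  exact (mulVec_mono_of_nonneg (pow_nonneg_of_nonneg hM _)
    (pow_mulVec_le_of_mulVec_le hM hx _)).trans (pow_mul_mulVec_le hM hr hN _)

theorem tendsto_pow_mulVec_nhds_zero (hM : ∀ i j, 0 ≤ M i j) (hx₀ : 0 ≤ x)
    (hx : M *ᵥ x ≤ x) (hN₀ : N ≠ 0) (hr₀ : 0 ≤ r) (hr₁ : r < 1) (hN : M ^ N *ᵥ x ≤ r • x) (i : ι) :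
    Tendsto (fun K => (M ^ K *ᵥ x) i) atTop (𝓝 0) := by
  have hbound : Tendsto (fun K => r ^ (K / N) * x i) atTop (𝓝 0) := by
    simpa using ((tendsto_pow_atTop_nhds_zero_of_lt_one hr₀ hr₁).comp
      (Nat.tendsto_div_const_atTop hN₀)).mul_const (x i)
  exact squeeze_zero (fun K => mulVec_nonneg_of_nonneg (pow_nonneg_of_nonneg hM K) hx₀ i)
    (fun K => pow_mulVec_le_pow_div hM hr₀ hx hN K i) hbound

end Real

end Matrix

noncomputable def runMatrix (m n : ℕ) : Matrix (Fin (n + 1)) (Fin (n + 1)) ℝ :=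
  Matrix.of fun i j =>
    if (i : ℕ) = 0 then (if (j : ℕ) < n then ((m : ℝ) - 1) / m else 0)
    else (if (j : ℕ) + 1 = i then (m : ℝ)⁻¹ else 0)

def runWeight (m n : ℕ) : Fin (n + 1) → ℝ := fun i => (m : ℝ) ^ (n - i)

theorem runWeight_nonneg (m n : ℕ) : 0 ≤ runWeight m n := fun _ => pow_nonneg m.cast_nonneg _

theorem runWeight_last (m n : ℕ) : runWeight m n (Fin.last n) = 1 := by
  simp [runWeight]

namespace runMatrix

variable {m n : ℕ}

theorem nonneg (hm : 0 < m) (i j : Fin (n + 1)) : 0 ≤ runMatrix m n i j := by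
  have : (1 : ℝ) ≤ m := Nat.one_le_cast.2 hm
  simp only [runMatrix, Matrix.of_apply]
  split_ifs
  all_goals first | rfl | positivity

theorem mulVec_zero (u : Fin (n + 1) → ℝ) :
    (runMatrix m n *ᵥ u) 0 = ((m : ℝ) - 1) / m * ∑ j : Fin n, u j.castSucc := by
  simp [runMatrix, mulVec, dotProduct, Fin.sum_univ_castSucc, mul_sum]

theorem mulVec_succ (u : Fin (n + 1) → ℝ) (i : Fin n) :
    (runMatrix m n *ᵥ u) i.succ = (m : ℝ)⁻¹ * u i.castSucc := by
  simp only [runMatrix, mulVec, dotProduct, of_apply, Fin.val_succ, Nat.succ_ne_zero, if_false,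
    add_left_inj, ite_mul, zero_mul]
  simp_rw [← Fin.val_castSucc i, ← Fin.ext_iff, sum_ite_eq', mem_univ, if_true]

theorem mulVec_runWeight (hm : 0 < m) :
    runMatrix m n *ᵥ runWeight m n = runWeight m n - Pi.single 0 1 := by
  have hm' : (m : ℝ) ≠ 0 := by positivity
  funext i
  rcases Fin.eq_zero_or_eq_succ i with rfl | ⟨i, rfl⟩
  · have hsum :
        ∑ j : Fin n, runWeight m n j.castSucc = m * ∑ j ∈ range n, (m : ℝ) ^ j := by
      simp only [runWeight, Fin.val_castSucc]
      rw [Fin.sum_univ_eq_sum_range (fun j => (m : ℝ) ^ (n - j)) n, mul_sum,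
        ← sum_range_reflect]
      refine sum_congr rfl fun j hj => ?_
      rw [← pow_succ']
      congr 1
      have := mem_range.1 hj
      omega
    rw [mulVec_zero, hsum, Pi.sub_apply, Pi.single_eq_same]
    simp only [runWeight, Fin.val_zero, Nat.sub_zero]
    field_simp
    linear_combination geom_sum_mul (m : ℝ) n
  · rw [mulVec_succ, Pi.sub_apply, Pi.single_eq_of_ne (Fin.succ_ne_zero i), sub_zero]
    simp only [runWeight, Fin.val_succ, Fin.val_castSucc]
    rw [show n - i = n - (i + 1) + 1 by omega, pow_succ]
    field_simp

theorem mulVec_runWeight_le (hm : 0 < m) : runMatrix m n *ᵥ runWeight m n ≤ runWeight m n := by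
  rw [mulVec_runWeight hm]
  exact sub_le_self _ (Pi.single_nonneg.2 zero_le_one)

theorem pow_mulVec_single_zero_apply_self (i : Fin (n + 1)) :
    (runMatrix m n ^ (i : ℕ) *ᵥ Pi.single 0 1) i = (m : ℝ)⁻¹ ^ (i : ℕ) := by
  induction i using Fin.induction with
  | zero => simp
  | succ i ih =>
    rw [Fin.val_castSucc] at ih
    rw [Fin.val_succ, pow_succ', ← mulVec_mulVec, mulVec_succ, ih, pow_succ']

theorem pow_succ_mulVec_runWeight_le (hm : 0 < m) :
    runMatrix m n ^ (n + 1) *ᵥ runWeight m n ≤ (1 - (m : ℝ)⁻¹ ^ n) • runWeight m n := by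
  intro i
  have hsum := congrFun (sub_pow_mulVec_eq_sum (mulVec_runWeight hm) (n + 1)) i
  rw [Pi.sub_apply, Finset.sum_apply] at hsum
  have hsingle : (0 : Fin (n + 1) → ℝ) ≤ Pi.single 0 1 := Pi.single_nonneg.2 zero_le_one
  have hterm :
      (m : ℝ)⁻¹ ^ (i : ℕ) ≤ ∑ k ∈ range (n + 1), (runMatrix m n ^ k *ᵥ Pi.single 0 1) i := by
    rw [← pow_mulVec_single_zero_apply_self i]
    exact single_le_sum (f := fun k => (runMatrix m n ^ k *ᵥ Pi.single 0 1) i)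
      (fun k _ => mulVec_nonneg_of_nonneg (pow_nonneg_of_nonneg (nonneg hm) k) hsingle i)
      (mem_range.2 i.isLt)
  have hweight : (m : ℝ)⁻¹ ^ n * runWeight m n i = (m : ℝ)⁻¹ ^ (i : ℕ) := by
    have hm' : (m : ℝ) ≠ 0 := by positivity
    have hsplit : (m : ℝ) ^ (n - i) * (m : ℝ) ^ (i : ℕ) = (m : ℝ) ^ n := by
      rw [← pow_add, Nat.sub_add_cancel i.is_le]
    rw [runWeight, inv_pow, inv_pow, ← hsplit]
    field_simp
  rw [Pi.smul_apply, smul_eq_mul, sub_mul, one_mul, hweight]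
  linarith

end runMatrix

theorem stmt_0_general (m n : ℕ) (hm : 2 ≤ m)
    (A W : Matrix (Fin (n + 1)) (Fin (n + 1)) ℝ)
    (hA : ∀ i j : Fin (n + 1), A i j =
      if (i : ℕ) = 0 then (if (j : ℕ) < n then (m : ℝ) - 1 else 0)
      else (if (j : ℕ) + 1 = (i : ℕ) then 1 else 0))
    (hW : W = (1 / (m : ℝ)) • A) :
    HasSum (fun k : ℕ => (W ^ k) (Fin.last n) 0) 1 := by
  have hm₀ : 0 < m := by omega
  have hWrun : W = runMatrix m n := by
    ext i j
    rw [hW, Matrix.smul_apply, hA, runMatrix, of_apply]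
    split_ifs <;> simp [div_eq_inv_mul]
  subst hWrun
  have hnonneg := runMatrix.nonneg (n := n) hm₀
  have hpartial (K : ℕ) : ∑ k ∈ range K, (runMatrix m n ^ k) (Fin.last n) 0 =
      1 - (runMatrix m n ^ K *ᵥ runWeight m n) (Fin.last n) := by
    have := congrFun (sub_pow_mulVec_eq_sum (runMatrix.mulVec_runWeight hm₀) K) (Fin.last n)
    simp only [Pi.sub_apply, Finset.sum_apply, mulVec_single_one, col_apply] at this
    rw [← this, runWeight_last]
  have hdecay := tendsto_pow_mulVec_nhds_zero hnonneg (runWeight_nonneg m n)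
    (runMatrix.mulVec_runWeight_le hm₀) n.succ_ne_zero
    (sub_nonneg.2 (pow_le_one₀ (by positivity) (inv_le_one_of_one_le₀ (by exact_mod_cast hm₀))))
    (sub_lt_self _ (by positivity)) (runMatrix.pow_succ_mulVec_runWeight_le hm₀) (Fin.last n)
  rw [hasSum_iff_tendsto_nat_of_nonneg (fun k => pow_nonneg_of_nonneg hnonneg k _ _)]
  simpa [hpartial] using tendsto_const_nhds.sub hdecay

/-- For integers `m ≥ 2`, `n ≥ 1`, with `A` the `(n+1)×(n+1)` real matrix whose first row is
`(m-1, …, m-1, 0)` and whose row `i ≥ 1` has a single `1` in column `i-1`, and `W = (1/m)·A`,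
the series `∑ₖ (Wᵏ)_{n,0}` converges with sum `1`. -/
theorem stmt_0 (m n : ℕ) (hm : 2 ≤ m) (hn : 1 ≤ n)
    (A W : Matrix (Fin (n + 1)) (Fin (n + 1)) ℝ)
    (hA : ∀ i j : Fin (n + 1), A i j =
      if (i : ℕ) = 0 then (if (j : ℕ) < n then (m : ℝ) - 1 else 0)
      else (if (j : ℕ) + 1 = (i : ℕ) then 1 else 0))
    (hW : W = (1 / (m : ℝ)) • A) :
    HasSum (fun k : ℕ => (W ^ k) (Fin.last n) 0) 1 :=
  stmt_0_general m n hm A W hA hW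
end

section
/- Let m ≥ 2 and n ≥ 1 be integers and let W = (1/m)·A, where A is the (n+1)×(n+1) real matrix with A 0 j = m−1 for 0 ≤ j ≤ n−1, A 0 n = 0, and for 1 ≤ i ≤ n: A i j = 1 if j = i−1 and 0 otherwise. Then the series ∑_{k=0}^∞ k·(W^k)_{n,0} converges and its sum equals m·(m^n − 1)/(m − 1). -/
/-!
Let `v k = Wᵏ e₀` and `p k = (v k)ₙ`. The columns of `W` sum to `1`, except the last one,
which vanishes, so the surviving mass `t k = ∑ᵢ (v k)ᵢ` satisfies `t k = p k + t (k + 1)`,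
and the mean `∑ k p k` equals `∑_{k ≥ 1} t k`. The expected remaining waiting times
`hᵢ = m^(i+1) + ⋯ + mⁿ` satisfy the first-step equations `h ᵥ* W = h - (1 - eₙ)`, so
`s k = h ⬝ᵥ v k` drops by exactly `t (k + 1)` at each step. As `0 ≤ s k ≤ (∑ h) t k`, this
forces `∑_{k ≥ 1} t k = s 0 = h₀`.
-/

open Filter Topology Finset Matrix

section Telescoping

variable {p t : ℕ → ℝ} {S : ℝ}

theorem hasSum_tail_of_telescoping (hp : ∀ k, 0 ≤ p k) (ht : ∀ k, t k = p k + t (k + 1))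
    (ht0 : Tendsto t atTop (𝓝 0)) (K : ℕ) : HasSum (fun j => p (j + K)) (t K) := by
  have hpartial (N : ℕ) : ∑ j ∈ range N, p (j + K) = t K - t (N + K) := by
    induction N with
    | zero => simp
    | succ N ih => rw [sum_range_succ, ih, ht (N + K), Nat.add_right_comm]; ring
  rw [hasSum_iff_tendsto_nat_of_nonneg (fun j => hp _), funext hpartial]
  simpa using (ht0.comp (tendsto_add_atTop_nat K)).const_sub (t K)

theorem sum_range_nat_mul_of_telescoping (ht : ∀ k, t k = p k + t (k + 1)) (K : ℕ) :
    ∑ k ∈ range K, k * p k = ∑ k ∈ range K, t (k + 1) - K * t K := by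
  induction K with
  | zero => simp
  | succ K ih => rw [sum_range_succ, sum_range_succ, ih, ht K]; push_cast; ring

theorem hasSum_nat_mul_of_telescoping (hp : ∀ k, 0 ≤ p k) (ht : ∀ k, t k = p k + t (k + 1))
    (hS : HasSum (fun k => t (k + 1)) S) : HasSum (fun k => k * p k) S := by
  have ht0 : Tendsto t atTop (𝓝 0) :=
    (tendsto_add_atTop_iff_nat 1).mp hS.summable.tendsto_atTop_zero
  have htail := hasSum_tail_of_telescoping hp ht ht0
  have ht_nonneg (k : ℕ) : 0 ≤ t k := (htail k).nonneg fun j => hp _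
  have hpartial := sum_range_nat_mul_of_telescoping ht
  have hsum : Summable fun k : ℕ => k * p k := by
    refine summable_of_sum_range_le (c := S) (fun k => mul_nonneg k.cast_nonneg (hp k))
      fun K => ?_
    have hle := sum_le_hasSum (range K) (fun k _ => ht_nonneg (k + 1)) hS
    have hKt_nonneg := mul_nonneg (K.cast_nonneg : (0 : ℝ) ≤ K) (ht_nonneg K)
    linarith [hpartial K]
  -- `K * t K` is dominated by the tail `∑_{k ≥ K} k * p k` of a convergent series.
  have hKt : Tendsto (fun K : ℕ => K * t K) atTop (𝓝 0) := by
    refine squeeze_zero (fun K => mul_nonneg K.cast_nonneg (ht_nonneg K)) (fun K => ?_)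
      (tendsto_sum_nat_add fun k : ℕ => k * p k)
    refine hasSum_le (fun j => ?_) ((htail K).mul_left (K : ℝ))
      ((summable_nat_add_iff K).mpr hsum).hasSum
    exact mul_le_mul_of_nonneg_right (by simp) (hp _)
  rw [hsum.hasSum_iff_tendsto_nat, funext hpartial]
  simpa using hS.tendsto_sum_nat.sub hKt

end Telescoping

section AbsorbingChain

variable {ι : Type*} [Fintype ι] [DecidableEq ι] {M : Matrix ι ι ℝ}

theorem pow_mulVec_nonneg (hM : ∀ i j, 0 ≤ M i j) {x : ι → ℝ} (hx : 0 ≤ x) (k : ℕ) :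
    0 ≤ M ^ k *ᵥ x := by
  induction k with
  | zero => simpa using hx
  | succ k ih =>
    rw [pow_succ', ← mulVec_mulVec]
    exact fun i => sum_nonneg fun j _ => mul_nonneg (hM i j) (ih j)

theorem dotProduct_pow_succ_mulVec {w c : ι → ℝ} (hw : w ᵥ* M = w - c) (x : ι → ℝ) (k : ℕ) :
    w ⬝ᵥ (M ^ (k + 1) *ᵥ x) = w ⬝ᵥ (M ^ k *ᵥ x) - c ⬝ᵥ (M ^ k *ᵥ x) := by
  rw [pow_succ', ← mulVec_mulVec, dotProduct_mulVec, hw, sub_dotProduct]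

theorem hasSum_nat_mul_pow_mulVec_apply (hM : ∀ i j, 0 ≤ M i j) {x h : ι → ℝ} {a : ι}
    (hx : 0 ≤ x) (hh : 0 ≤ h) (hone : 1 ᵥ* M = 1 - Pi.single a 1)
    (hpot : h ᵥ* M = h - (1 - Pi.single a 1)) :
    HasSum (fun k : ℕ => k * (M ^ k *ᵥ x) a) (h ⬝ᵥ x) := by
  set v := fun k : ℕ => M ^ k *ᵥ x
  set t := fun k : ℕ => 1 ⬝ᵥ v k
  set s := fun k : ℕ => h ⬝ᵥ v k
  have hv (k : ℕ) : 0 ≤ v k := pow_mulVec_nonneg hM hx k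
  have hexit (k : ℕ) : (1 - Pi.single a 1) ⬝ᵥ v k = t k - v k a := by
    rw [sub_dotProduct, single_dotProduct, one_mul]
  have ht (k : ℕ) : t k = v k a + t (k + 1) := by
    have := dotProduct_pow_succ_mulVec hone x k
    rw [single_dotProduct, one_mul] at this
    simp only [t, v] at this ⊢
    linarith
  have hs (k : ℕ) : s (k + 1) = s k - t (k + 1) := by
    have := dotProduct_pow_succ_mulVec hpot x k
    rw [hexit] at this
    simp only [s, t, v] at this ⊢
    linarith [ht k]
  have ht_nonneg (k : ℕ) : 0 ≤ t k := dotProduct_nonneg_of_nonneg (fun _ => zero_le_one) (hv k)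
  have hs_nonneg (k : ℕ) : 0 ≤ s k := dotProduct_nonneg_of_nonneg hh (hv k)
  have hs_le (k : ℕ) : s k ≤ (∑ i, h i) * t k := by
    simp only [s, t, one_dotProduct, mul_sum]
    exact sum_le_sum fun i _ =>
      mul_le_mul_of_nonneg_right (single_le_sum (fun j _ => hh j) (mem_univ i)) (hv k i)
  have hpartial (K : ℕ) : ∑ k ∈ range K, t (k + 1) = s 0 - s K := by
    rw [← sum_range_sub']
    exact sum_congr rfl fun k _ => by rw [hs k]; ring
  have hsum : Summable fun k => t (k + 1) :=
    summable_of_sum_range_le (c := s 0) (fun k => ht_nonneg _)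
      fun K => by linarith [hpartial K, hs_nonneg K]
  have hs0 : Tendsto s atTop (𝓝 0) := by
    refine (tendsto_add_atTop_iff_nat 1).mp (squeeze_zero (fun k => hs_nonneg _)
      (fun k => hs_le (k + 1)) ?_)
    simpa using hsum.tendsto_atTop_zero.const_mul (∑ i, h i)
  refine hasSum_nat_mul_of_telescoping (fun k => hv k a) ht ?_
  rw [hsum.hasSum_iff_tendsto_nat, funext hpartial]
  simpa [s, v] using hs0.const_sub (s 0)

end AbsorbingChain

namespace RunMatrix

/-- `m^(i+1) + ⋯ + mⁿ`, the expected number of further letters needed after a run of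
length `i`. -/
noncomputable def expectedWait (m n : ℕ) (i : Fin (n + 1)) : ℝ :=
  ((m : ℝ) ^ (n + 1) - (m : ℝ) ^ ((i : ℕ) + 1)) / (m - 1)

theorem expectedWait_nonneg {m : ℕ} (hm : 2 ≤ m) (n : ℕ) : 0 ≤ expectedWait m n := by
  have : (1 : ℝ) < m := by exact_mod_cast hm
  intro i
  refine div_nonneg (sub_nonneg.mpr (pow_le_pow_right₀ this.le ?_)) (by linarith)
  omega

variable {m n : ℕ} {A : Matrix (Fin (n + 1)) (Fin (n + 1)) ℝ}
  (hA : ∀ i j : Fin (n + 1), A i j =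
    if (i : ℕ) = 0 then (if (j : ℕ) < n then (m : ℝ) - 1 else 0)
    else (if (j : ℕ) + 1 = (i : ℕ) then 1 else 0))
include hA

theorem entry_nonneg (hm : 1 ≤ m) (i j : Fin (n + 1)) : 0 ≤ A i j := by
  have : (1 : ℝ) ≤ m := by exact_mod_cast hm
  rw [hA]
  split_ifs <;> linarith

theorem vecMul_apply_last (g : Fin (n + 1) → ℝ) : (g ᵥ* A) (Fin.last n) = 0 := by
  simp [vecMul, dotProduct, hA, Nat.ne_of_gt (Fin.is_lt _)]

theorem vecMul_apply_castSucc (g : Fin (n + 1) → ℝ) (j : Fin n) :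
    (g ᵥ* A) j.castSucc = (m - 1) * g 0 + g j.succ := by
  simp [vecMul, dotProduct, Fin.sum_univ_succ, hA, Fin.val_eq_val, mul_comm]

theorem one_vecMul_smul (hm : 2 ≤ m) :
    1 ᵥ* ((1 / (m : ℝ)) • A) = 1 - Pi.single (Fin.last n) 1 := by
  have : (m : ℝ) ≠ 0 := by positivity
  ext j
  induction j using Fin.lastCases with
  | last => simp [vecMul_smul, vecMul_apply_last hA]
  | cast j =>
    simp [vecMul_smul, vecMul_apply_castSucc hA, Fin.castSucc_ne_last]
    field_simp

theorem expectedWait_vecMul_smul (hm : 2 ≤ m) :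
    expectedWait m n ᵥ* ((1 / (m : ℝ)) • A) =
      expectedWait m n - (1 - Pi.single (Fin.last n) 1) := by
  have : (m : ℝ) - 1 ≠ 0 := by
    have : (2 : ℝ) ≤ m := by exact_mod_cast hm
    linarith
  ext j
  induction j using Fin.lastCases with
  | last => simp [vecMul_smul, vecMul_apply_last hA, expectedWait]
  | cast j =>
    simp [vecMul_smul, vecMul_apply_castSucc hA, Fin.castSucc_ne_last, expectedWait]
    field_simp
    ring

end RunMatrix

theorem stmt_1_general (m n : ℕ) (hm : 2 ≤ m)
    (A W : Matrix (Fin (n + 1)) (Fin (n + 1)) ℝ)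
    (hA : ∀ i j : Fin (n + 1), A i j =
      if (i : ℕ) = 0 then (if (j : ℕ) < n then (m : ℝ) - 1 else 0)
      else (if (j : ℕ) + 1 = (i : ℕ) then 1 else 0))
    (hW : W = (1 / (m : ℝ)) • A) :
    HasSum (fun k : ℕ => (k : ℝ) * (W ^ k) (Fin.last n) 0)
      ((m : ℝ) * ((m : ℝ) ^ n - 1) / ((m : ℝ) - 1)) := by
  subst hW
  have hW_nonneg (i j : Fin (n + 1)) : 0 ≤ ((1 / (m : ℝ)) • A) i j := by
    rw [Matrix.smul_apply, smul_eq_mul]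
    exact mul_nonneg (by positivity) (RunMatrix.entry_nonneg hA (by omega) i j)
  have hmean := hasSum_nat_mul_pow_mulVec_apply hW_nonneg (x := Pi.single 0 1)
    (Pi.single_nonneg.mpr zero_le_one) (RunMatrix.expectedWait_nonneg hm n)
    (RunMatrix.one_vecMul_smul hA hm) (RunMatrix.expectedWait_vecMul_smul hA hm)
  have hwait : RunMatrix.expectedWait m n ⬝ᵥ Pi.single 0 1 = m * (m ^ n - 1) / (m - 1) := by
    simp only [dotProduct_single, mul_one, RunMatrix.expectedWait, Fin.val_zero]
    ring
  simpa [mulVec_single_one, hwait] using hmean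

/-- For integers `m ≥ 2`, `n ≥ 1`, with `A` the `(n+1)×(n+1)` real matrix whose first row is
`(m-1, …, m-1, 0)` and whose row `i ≥ 1` has a single `1` in column `i-1`, and `W = (1/m)·A`,
the series `∑ₖ k·(Wᵏ)_{n,0}` converges with sum `m·(mⁿ − 1)/(m − 1)`. -/
theorem stmt_1 (m n : ℕ) (hm : 2 ≤ m) (hn : 1 ≤ n)
    (A W : Matrix (Fin (n + 1)) (Fin (n + 1)) ℝ)
    (hA : ∀ i j : Fin (n + 1), A i j =
      if (i : ℕ) = 0 then (if (j : ℕ) < n then (m : ℝ) - 1 else 0)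
      else (if (j : ℕ) + 1 = (i : ℕ) then 1 else 0))
    (hW : W = (1 / (m : ℝ)) • A) :
    HasSum (fun k : ℕ => (k : ℝ) * (W ^ k) (Fin.last n) 0)
      ((m : ℝ) * ((m : ℝ) ^ n - 1) / ((m : ℝ) - 1)) :=
  stmt_1_general m n hm A W hA hW
end

section
/- Let m ≥ 2 and n ≥ 1 be integers and let W = (1/m)·A, where A is the (n+1)×(n+1) real matrix with A 0 j = m−1 for 0 ≤ j ≤ n−1, A 0 n = 0, and for 1 ≤ i ≤ n: A i j = 1 if j = i−1 and 0 otherwise. Then the series ∑_{k=0}^∞ k²·(W^k)_{n,0} converges and its sum equals (m/(m−1)²)·(2·m^{2n+1} − (2n+3)·m^{n+1} + (2n+1)·m^n + m − 1). -/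
/-!
Write `q = 1/m`, `p k = (W ^ k) (Fin.last n) 0` and `s k = ∑ i : Fin n, (W ^ k) i.castSucc 0`,
the probabilities that the first run of `n` letters ends at step `k`, resp. that no run has been
completed after `k` letters. Then `s (k + 1) + p (k + 1) = s k`, `p k = 0` for `0 < k < n`,
`p n = qⁿ`, and `p (k + n + 1) = (1 - q) qⁿ s k`, because a run completed at step `k + n + 1`
starts after a different letter at step `k + 1`. The last relation makes `s` decay geometrically,
so every moment converges; summation by parts gives `∑ p = 1`, `∑ k p k = T₀` and
`∑ k² p k = 2 T₁ + T₀` with `T₀ = ∑ s k`, `T₁ = ∑ k s k`. Splitting the first two series at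
`k = n` yields two linear equations for `T₀, T₁`, whose solution is the closed form.
-/

open Finset

section Survival

variable {s p : ℕ → ℝ}

theorem summable_pow_mul_of_le_mul_shift {N : ℕ} {r : ℝ} (hN : N ≠ 0)
    (hr₀ : 0 < r) (hr₁ : r < 1) (hs : ∀ k, 0 ≤ s k) (hanti : Antitone s)
    (hdecay : ∀ k, s (k + N) ≤ r * s k) (d : ℕ) :
    Summable fun k : ℕ => (k : ℝ) ^ d * s k := by
  set ρ := r ^ (N⁻¹ : ℝ)
  have hρN : ρ ^ N = r := Real.rpow_inv_natCast_pow hr₀.le hN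
  have hρ₀ : 0 < ρ := Real.rpow_pos_of_pos hr₀ _
  have hρ₁ : ρ < 1 := Real.rpow_lt_one hr₀.le hr₁ (by positivity)
  have hbound : ∀ k, s k ≤ s 0 / r * ρ ^ k := by
    intro k
    induction k using Nat.strong_induction_on with
    | _ k ih =>
      rcases lt_or_ge k N with hk | hk
      · calc s k ≤ s 0 := hanti k.zero_le
          _ = s 0 / r * ρ ^ N := by rw [hρN]; field_simp
          _ ≤ s 0 / r * ρ ^ k := mul_le_mul_of_nonneg_left
            (pow_le_pow_of_le_one hρ₀.le hρ₁.le hk.le) (div_nonneg (hs 0) hr₀.le)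
      · obtain ⟨j, rfl⟩ := Nat.exists_eq_add_of_le' hk
        calc s (j + N) ≤ r * s j := hdecay j
          _ ≤ r * (s 0 / r * ρ ^ j) := by gcongr; exact ih j (by omega)
          _ = s 0 / r * ρ ^ (j + N) := by rw [pow_add, hρN]; field_simp
  have hgeom : Summable fun k : ℕ => (k : ℝ) ^ d * ρ ^ k :=
    summable_pow_mul_geometric_of_norm_lt_one d (by rwa [Real.norm_of_nonneg hρ₀.le])
  refine .of_nonneg_of_le (fun k => mul_nonneg (by positivity) (hs k)) (fun k => ?_)
    (hgeom.mul_left (s 0 / r))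
  calc (k : ℝ) ^ d * s k ≤ (k : ℝ) ^ d * (s 0 / r * ρ ^ k) := by gcongr; exact hbound k
    _ = s 0 / r * ((k : ℝ) ^ d * ρ ^ k) := by ring

theorem hasSum_mul_succ_by_parts (f : ℕ → ℝ)
    (hmass : ∀ k, s (k + 1) + p (k + 1) = s k) (hf : Summable fun k => f k * s k)
    (hf' : Summable fun k => f (k + 1) * s k) :
    HasSum (fun k => f (k + 1) * p (k + 1)) (f 0 * s 0 + ∑' k, (f (k + 1) - f k) * s k) := by
  have hshift : HasSum (fun k => f (k + 1) * s (k + 1)) (∑' k, f k * s k - f 0 * s 0) := by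
    simpa using (hasSum_nat_add_iff' 1).2 hf.hasSum
  have hterm : (fun k => f (k + 1) * p (k + 1))
      = fun k => f (k + 1) * s k - f (k + 1) * s (k + 1) := by
    ext k
    rw [← hmass k]
    ring
  have hval : f 0 * s 0 + ∑' k, (f (k + 1) - f k) * s k
      = ∑' k, f (k + 1) * s k - (∑' k, f k * s k - f 0 * s 0) := by
    simp_rw [sub_mul]
    rw [hf'.tsum_sub hf]
    ring
  rw [hterm, hval]
  exact hf'.hasSum.sub hshift

theorem eq_add_mul_tsum_of_hasSum {n : ℕ} {α c V : ℝ} (g : ℕ → ℝ) (hn : 0 < n)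
    (hpn : p n = α) (hp_lt : ∀ k, 0 < k → k < n → p k = 0)
    (htail : ∀ k, p (k + n + 1) = c * s k) (h : HasSum (fun k => g (k + 1) * p (k + 1)) V) :
    V = g n * α + c * ∑' k, g (k + n + 1) * s k := by
  have hhead : ∑ k ∈ range n, g (k + 1) * p (k + 1) = g n * α := by
    obtain ⟨n, rfl⟩ := Nat.exists_eq_add_of_le' hn
    rw [sum_range_succ, sum_eq_zero fun k hk => by
      rw [hp_lt (k + 1) k.succ_pos (by simp at hk; omega), mul_zero], zero_add, hpn]
  have hshift := (hasSum_nat_add_iff' n).2 h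
  simp only [hhead, htail, mul_left_comm _ c] at hshift
  rw [← sub_eq_iff_eq_add', ← hshift.tsum_eq, tsum_mul_left]

theorem summable_pow_mul_of_survival {n : ℕ} {c : ℝ} (hc₀ : 0 < c) (hc₁ : c < 1)
    (hs : ∀ k, 0 ≤ s k) (hp : ∀ k, 0 ≤ p k) (hmass : ∀ k, s (k + 1) + p (k + 1) = s k)
    (htail : ∀ k, p (k + n + 1) = c * s k) (d : ℕ) :
    Summable fun k : ℕ => (k : ℝ) ^ d * s k := by
  have hanti : Antitone s := antitone_nat_of_succ_le fun k => by linarith [hmass k, hp (k + 1)]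
  refine summable_pow_mul_of_le_mul_shift (r := 1 - c) n.succ_ne_zero (by linarith)
    (by linarith) hs hanti (fun k => ?_) d
  have := hmass (k + n)
  rw [htail] at this
  show s (k + n + 1) ≤ _
  linarith [hanti (k.le_add_right n)]

theorem exists_hasSum_sq_mul_of_survival {n : ℕ} {α c : ℝ} (hn : 0 < n)
    (hc₀ : 0 < c) (hc₁ : c < 1) (hs₀ : s 0 = 1) (hs : ∀ k, 0 ≤ s k) (hp : ∀ k, 0 ≤ p k)
    (hmass : ∀ k, s (k + 1) + p (k + 1) = s k) (hpn : p n = α)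
    (hp_lt : ∀ k, 0 < k → k < n → p k = 0) (htail : ∀ k, p (k + n + 1) = c * s k) :
    ∃ T₀ T₁ : ℝ, 1 = α + c * T₀ ∧ T₀ = n * α + c * (T₁ + (n + 1) * T₀) ∧
      HasSum (fun k : ℕ => (k : ℝ) ^ 2 * p k) (2 * T₁ + T₀) := by
  have hsum := summable_pow_mul_of_survival hc₀ hc₁ hs hp hmass htail
  have hsum₀ : Summable s := by simpa using hsum 0
  have hsum₁ : Summable fun k : ℕ => (k : ℝ) * s k := by simpa using hsum 1
  have hsum₂ : Summable fun k : ℕ => (k : ℝ) ^ 2 * s k := hsum 2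
  have hsum₁' : Summable fun k : ℕ => ((k : ℝ) + 1) * s k := by
    simpa [add_mul] using hsum₁.add hsum₀
  have hsum₂' : Summable fun k : ℕ => ((k : ℝ) + 1) ^ 2 * s k := by
    simpa [add_sq, add_mul, mul_assoc] using (hsum₂.add (hsum₁.mul_left 2)).add hsum₀
  have hP₀ := hasSum_mul_succ_by_parts (fun _ => 1) hmass (by simpa using hsum₀)
    (by simpa using hsum₀)
  have hP₁ := hasSum_mul_succ_by_parts (fun k : ℕ => (k : ℝ)) hmass hsum₁
    (by simpa using hsum₁')
  have hP₂ := hasSum_mul_succ_by_parts (fun k : ℕ => (k : ℝ) ^ 2) hmass hsum₂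
    (by simpa using hsum₂')
  have E₀ := eq_add_mul_tsum_of_hasSum (fun _ => 1) hn hpn hp_lt htail hP₀
  have E₁ := eq_add_mul_tsum_of_hasSum (fun k : ℕ => (k : ℝ)) hn hpn hp_lt htail hP₁
  simp only [sub_self, zero_mul, tsum_zero, Nat.cast_add, Nat.cast_one, Nat.cast_zero,
    add_sub_cancel_left, one_mul, hs₀, add_zero, zero_add, ne_eq, OfNat.ofNat_ne_zero,
    not_false_eq_true, zero_pow] at E₀ E₁ hP₂
  have hT₁ : ∑' k : ℕ, ((k : ℝ) + n + 1) * s k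
      = ∑' k : ℕ, (k : ℝ) * s k + (n + 1) * ∑' k, s k := by
    rw [← tsum_mul_left, ← hsum₁.tsum_add (hsum₀.mul_left _)]
    congr 1 with k
    ring
  have hT₂ : ∑' k : ℕ, (((k : ℝ) + 1) ^ 2 - (k : ℝ) ^ 2) * s k
      = 2 * ∑' k : ℕ, (k : ℝ) * s k + ∑' k, s k := by
    rw [← tsum_mul_left, ← (hsum₁.mul_left 2).tsum_add hsum₀]
    congr 1 with k
    ring
  rw [hT₁] at E₁
  rw [hT₂] at hP₂
  exact ⟨_, _, E₀, E₁, (hasSum_nat_add_iff' 1).1 (by simpa using hP₂)⟩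

end Survival

/-- `W i j` is the probability of moving from run length `j` to run length `i` when the fixed
letter has probability `q`; column `n` vanishes, so mass reaching run length `n` leaves the
chain. -/
structure IsRunLengthMatrix {n : ℕ} (q : ℝ) (W : Matrix (Fin (n + 1)) (Fin (n + 1)) ℝ) :
    Prop where
  zero_castSucc : ∀ i : Fin n, W 0 i.castSucc = 1 - q
  zero_last : W 0 (Fin.last n) = 0
  succ_apply : ∀ (i : Fin n) (j : Fin (n + 1)), W i.succ j = if j = i.castSucc then q else 0

namespace IsRunLengthMatrix

variable {n : ℕ} {q : ℝ} {W : Matrix (Fin (n + 1)) (Fin (n + 1)) ℝ}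

theorem pow_succ_apply_zero (hW : IsRunLengthMatrix q W) (k : ℕ) :
    (W ^ (k + 1)) 0 0 = (1 - q) * ∑ i : Fin n, (W ^ k) i.castSucc 0 := by
  rw [pow_succ', Matrix.mul_apply, Fin.sum_univ_castSucc, hW.zero_last, zero_mul, add_zero,
    mul_sum]
  simp only [hW.zero_castSucc]

theorem pow_succ_apply_succ (hW : IsRunLengthMatrix q W) (k : ℕ) (i : Fin n) :
    (W ^ (k + 1)) i.succ 0 = q * (W ^ k) i.castSucc 0 := by
  simp [pow_succ', Matrix.mul_apply, hW.succ_apply]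

theorem pow_add_apply_last (hW : IsRunLengthMatrix q W) {t : ℕ} (ht : t ≤ n) (k : ℕ) :
    (W ^ (k + t)) (Fin.last n) 0 = q ^ t * (W ^ k) ⟨n - t, by omega⟩ 0 := by
  induction t generalizing k with
  | zero => simp [Fin.last]
  | succ t ih =>
    have hsucc : (⟨n - t, by omega⟩ : Fin (n + 1)) = Fin.succ ⟨n - (t + 1), by omega⟩ := by
      ext
      simp only [Fin.val_succ]
      omega
    rw [← add_assoc, add_right_comm, ih (by omega), hsucc, hW.pow_succ_apply_succ, pow_succ,
      mul_assoc]
    rfl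

theorem sum_pow_succ_castSucc_add_last (hW : IsRunLengthMatrix q W) (k : ℕ) :
    ∑ i : Fin n, (W ^ (k + 1)) i.castSucc 0 + (W ^ (k + 1)) (Fin.last n) 0
      = ∑ i : Fin n, (W ^ k) i.castSucc 0 := by
  rw [← Fin.sum_univ_castSucc (fun i => (W ^ (k + 1)) i 0), Fin.sum_univ_succ,
    hW.pow_succ_apply_zero]
  simp only [hW.pow_succ_apply_succ, ← mul_sum]
  ring

theorem apply_nonneg (hW : IsRunLengthMatrix q W) (hq₀ : 0 ≤ q) (hq₁ : q ≤ 1)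
    (i j : Fin (n + 1)) : 0 ≤ W i j := by
  cases i using Fin.cases with
  | zero =>
    cases j using Fin.lastCases with
    | last => rw [hW.zero_last]
    | cast j => rw [hW.zero_castSucc]; linarith
  | succ i =>
    rw [hW.succ_apply]
    split_ifs <;> linarith

theorem exists_hasSum_sq_mul (hW : IsRunLengthMatrix q W) (hn : 0 < n) (hq₀ : 0 < q)
    (hq₁ : q < 1) :
    ∃ T₀ T₁ : ℝ, 1 = q ^ n + (1 - q) * q ^ n * T₀ ∧
      T₀ = n * q ^ n + (1 - q) * q ^ n * (T₁ + (n + 1) * T₀) ∧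
      HasSum (fun k : ℕ => (k : ℝ) ^ 2 * (W ^ k) (Fin.last n) 0) (2 * T₁ + T₀) := by
  have hpow := Matrix.pow_apply_nonneg (hW.apply_nonneg hq₀.le hq₁.le)
  refine exists_hasSum_sq_mul_of_survival (s := fun k => ∑ i : Fin n, (W ^ k) i.castSucc 0)
    (p := fun k => (W ^ k) (Fin.last n) 0) hn (by positivity) ?_ ?_
    (fun k => sum_nonneg fun i _ => hpow k _ _) (fun k => hpow k _ _)
    hW.sum_pow_succ_castSucc_add_last ?_ ?_ ?_
  · exact mul_lt_one_of_nonneg_of_lt_one_left (by linarith) (by linarith)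
      (pow_le_one₀ hq₀.le hq₁.le)
  · obtain ⟨n, rfl⟩ := Nat.exists_eq_add_of_le' hn
    simp [Matrix.one_apply]
  · simpa [Matrix.one_apply] using hW.pow_add_apply_last le_rfl 0
  · intro k hk₀ hkn
    simpa [Matrix.one_apply, Fin.ext_iff, Nat.sub_ne_zero_of_lt hkn]
      using hW.pow_add_apply_last hkn.le 0
  · intro k
    have h0 : (⟨n - n, by omega⟩ : Fin (n + 1)) = 0 := Fin.ext (Nat.sub_self n)
    rw [add_right_comm, hW.pow_add_apply_last le_rfl, h0, hW.pow_succ_apply_zero]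
    ring

end IsRunLengthMatrix

theorem isRunLengthMatrix_one_div_smul {m n : ℕ} (hm : m ≠ 0)
    {A : Matrix (Fin (n + 1)) (Fin (n + 1)) ℝ}
    (hA : ∀ i j : Fin (n + 1), A i j =
      if (i : ℕ) = 0 then (if (j : ℕ) < n then (m : ℝ) - 1 else 0)
      else (if (j : ℕ) + 1 = (i : ℕ) then 1 else 0)) :
    IsRunLengthMatrix (1 / (m : ℝ)) ((1 / (m : ℝ)) • A) where
  zero_castSucc i := by
    simp [hA]
    field_simp
  zero_last := by simp [hA]
  succ_apply i j := by
    simp [hA, Fin.ext_iff]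

/-- For integers `m ≥ 2`, `n ≥ 1`, with `A` the `(n+1)×(n+1)` real matrix whose first row is
`(m-1, …, m-1, 0)` and whose row `i ≥ 1` has a single `1` in column `i-1`, and `W = (1/m)·A`,
the series `∑ₖ k²·(Wᵏ)_{n,0}` converges with sum
`(m/(m−1)²)·(2·m^{2n+1} − (2n+3)·m^{n+1} + (2n+1)·mⁿ + m − 1)`. -/
theorem stmt_3 (m n : ℕ) (hm : 2 ≤ m) (hn : 1 ≤ n)
    (A W : Matrix (Fin (n + 1)) (Fin (n + 1)) ℝ)
    (hA : ∀ i j : Fin (n + 1), A i j =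
      if (i : ℕ) = 0 then (if (j : ℕ) < n then (m : ℝ) - 1 else 0)
      else (if (j : ℕ) + 1 = (i : ℕ) then 1 else 0))
    (hW : W = (1 / (m : ℝ)) • A) :
    HasSum (fun k : ℕ => (k : ℝ) ^ 2 * (W ^ k) (Fin.last n) 0)
      ((m : ℝ) / ((m : ℝ) - 1) ^ 2 *
        (2 * (m : ℝ) ^ (2 * n + 1) - (2 * (n : ℝ) + 3) * (m : ℝ) ^ (n + 1)
          + (2 * (n : ℝ) + 1) * (m : ℝ) ^ n + (m : ℝ) - 1)) := by
  have hm₁ : (1 : ℝ) < m := by exact_mod_cast hm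
  subst hW
  obtain ⟨T₀, T₁, h₀, h₁, hsum⟩ :=
    (isRunLengthMatrix_one_div_smul (by omega) hA).exists_hasSum_sq_mul hn (by positivity)
      ((div_lt_one (by positivity)).2 hm₁)
  convert hsum using 1
  rw [one_div, inv_pow] at h₀ h₁
  have hm₁' : (m : ℝ) - 1 ≠ 0 := by linarith
  field_simp at h₀ h₁ ⊢
  linear_combination 2 * (m - 1) * h₁ + (2 * m ^ (n + 1) - (m - 1) * (2 * n + 1)) * h₀
end

section
/- Let m ≥ 2 and n ≥ 1 be integers and let S_{m,n} = ∑_{(a,b)} lcp(a,b), the sum over all ordered pairs (a,b) of lists over Fin m of length at most n of the length of the longest common prefix of a and b. Then (m − 1)³ · S_{m,n} = m·(m^{2n+1} − (2n+1)·m^{n+1} + (2n+1)·m^n − 1). -/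
/-!
Every list of length at most `n + 1` is either `[]` or `x :: l` with `l` of length at most `n`,
and `lcp (x :: a) (y :: b)` has length `(lcp a b).length + 1` if `x = y` and `0` otherwise.
Hence, with `N n = 1 + m + ⋯ + mⁿ` lists of length at most `n`, the sums satisfy
`S (n + 1) = m * (N n ^ 2 + S n)`, and the closed form follows by induction from
`(m - 1) * N n = m ^ (n + 1) - 1`.
-/

/-- The longest common prefix of two lists. -/
def lcp {α : Type*} [DecidableEq α] : List α → List α → List α
  | a :: as, b :: bs => if a = b then a :: lcp as bs else []
  | _, _ => []

open Finset

section Lcp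

variable {α : Type*} [DecidableEq α]

@[simp]
lemma lcp_nil_left (b : List α) : lcp [] b = [] := by
  cases b <;> rfl

@[simp]
lemma lcp_nil_right (a : List α) : lcp a [] = [] := by
  cases a <;> rfl

lemma length_lcp_cons_cons (x y : α) (a b : List α) :
    (lcp (x :: a) (y :: b)).length = if x = y then (lcp a b).length + 1 else 0 := by
  by_cases h : x = y <;> simp [lcp, h]

end Lcp

section BoundedLists

variable {α : Type*} [Fintype α] [DecidableEq α]

variable (α) in
def boundedLists : ℕ → Finset (List α)
  | 0 => {[]}
  | n + 1 => insert [] ((univ ×ˢ boundedLists n).image fun p => p.1 :: p.2)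

lemma mem_boundedLists {n : ℕ} {l : List α} : l ∈ boundedLists α n ↔ l.length ≤ n := by
  induction n generalizing l with
  | zero => simp [boundedLists]
  | succ n ih => cases l <;> simp [boundedLists, ih]

lemma sum_boundedLists_succ {M : Type*} [AddCommMonoid M] (n : ℕ) (f : List α → M) :
    ∑ l ∈ boundedLists α (n + 1), f l
      = f [] + ∑ x, ∑ l ∈ boundedLists α n, f (x :: l) := by
  have hinj : (fun p : α × List α => p.1 :: p.2).Injective :=
    fun p q h => Prod.ext (List.cons_eq_cons.mp h).1 (List.cons_eq_cons.mp h).2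
  rw [boundedLists, sum_insert (by simp), sum_image hinj.injOn, sum_product]

lemma card_boundedLists (n : ℕ) :
    #(boundedLists α n) = ∑ k ∈ range (n + 1), Fintype.card α ^ k := by
  induction n with
  | zero => simp [boundedLists]
  | succ n ih =>
    rw [card_eq_sum_ones, sum_boundedLists_succ]
    simp only [ih, sum_const, card_univ, smul_eq_mul, geom_sum_succ]
    ring

lemma sum_length_lcp_boundedLists_succ (n : ℕ) :
    ∑ a ∈ boundedLists α (n + 1), ∑ b ∈ boundedLists α (n + 1), (lcp a b).length
      = Fintype.card α *
          (#(boundedLists α n) ^ 2 + ∑ a ∈ boundedLists α n, ∑ b ∈ boundedLists α n,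
            (lcp a b).length) := by
  simp only [sum_boundedLists_succ, lcp_nil_left, lcp_nil_right, length_lcp_cons_cons,
    List.length_nil, sum_const_zero, zero_add]
  have hswap : ∀ x : α, ∀ a ∈ boundedLists α n,
      ∑ y, ∑ b ∈ boundedLists α n, (if x = y then (lcp a b).length + 1 else 0)
        = ∑ b ∈ boundedLists α n, ((lcp a b).length + 1) := fun x a _ => by
    rw [sum_comm]
    simp
  simp only [sum_congr rfl fun x _ => sum_congr rfl (hswap x), sum_add_distrib, sum_const,
    card_univ, smul_eq_mul]
  ring

end BoundedLists

lemma sub_one_pow_three_mul_of_rec {R : Type*} [CommRing R] (q : R) (S : ℕ → R) (h0 : S 0 = 0)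
    (hS : ∀ n, S (n + 1) = q * ((∑ k ∈ range (n + 1), q ^ k) ^ 2 + S n)) (n : ℕ) :
    (q - 1) ^ 3 * S n
      = q * (q ^ (2 * n + 1) - (2 * (n : R) + 1) * q ^ (n + 1)
          + (2 * (n : R) + 1) * q ^ n - 1) := by
  induction n with
  | zero => simp [h0]
  | succ n ih =>
    calc (q - 1) ^ 3 * S (n + 1)
        = q * ((q - 1) * ((∑ k ∈ range (n + 1), q ^ k) * (q - 1)) ^ 2 + (q - 1) ^ 3 * S n) := by
          rw [hS]; ring
      _ = _ := by rw [geom_sum_mul, ih]; push_cast; ring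

theorem stmt_6_general (m n : ℕ)
    (L : Finset (List (Fin m))) (hL : ∀ l : List (Fin m), l ∈ L ↔ l.length ≤ n)
    (S : ℕ) (hS : S = ∑ a ∈ L, ∑ b ∈ L, (lcp a b).length) :
    ((m : ℤ) - 1) ^ 3 * (S : ℤ)
      = (m : ℤ) * ((m : ℤ) ^ (2 * n + 1) - (2 * (n : ℤ) + 1) * (m : ℤ) ^ (n + 1)
          + (2 * (n : ℤ) + 1) * (m : ℤ) ^ n - 1) := by
  have hL_eq : L = boundedLists (Fin m) n := by
    ext l
    rw [hL, mem_boundedLists]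
  subst hS hL_eq
  refine sub_one_pow_three_mul_of_rec (m : ℤ)
    (fun n => ((∑ a ∈ boundedLists (Fin m) n, ∑ b ∈ boundedLists (Fin m) n,
      (lcp a b).length : ℕ) : ℤ)) (by simp [boundedLists]) (fun n => ?_) n
  rw [sum_length_lcp_boundedLists_succ, card_boundedLists, Fintype.card_fin]
  push_cast
  rfl

/-- For integers `m ≥ 2`, `n ≥ 1`, the sum `S_{m,n}` over all ordered pairs `(a, b)` of lists
over `Fin m` of length at most `n` of the length of the longest common prefix of `a` and `b`
satisfies `(m − 1)³·S_{m,n} = m·(m^{2n+1} − (2n+1)·m^{n+1} + (2n+1)·mⁿ − 1)`. -/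
theorem stmt_6 (m n : ℕ) (hm : 2 ≤ m) (hn : 1 ≤ n)
    (L : Finset (List (Fin m))) (hL : ∀ l : List (Fin m), l ∈ L ↔ l.length ≤ n)
    (S : ℕ) (hS : S = ∑ a ∈ L, ∑ b ∈ L, (lcp a b).length) :
    ((m : ℤ) - 1) ^ 3 * (S : ℤ)
      = (m : ℤ) * ((m : ℤ) ^ (2 * n + 1) - (2 * (n : ℤ) + 1) * (m : ℤ) ^ (n + 1)
          + (2 * (n : ℤ) + 1) * (m : ℤ) ^ n - 1) :=
  stmt_6_general m n L hL S hS
end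

section
/- Let n ≥ 1 be an integer and let S_{2,n} = ∑_{(a,b)} lcp(a,b), the sum over all ordered pairs (a,b) of lists over Fin 2 of length at most n of the length of the longest common prefix of a and b. Then S_{2,n} = 4·2^{2n} − (4n+2)·2^n − 2 (the integer sequence A286778). -/
/-!
Let `T n` be the set of lists of length at most `n` over an alphabet with `q` letters and `S n`
the sum of `|lcp a b|` over `T n × T n`. A nonempty list in `T (n + 1)` is `x :: l` with `l ∈ T n`,
and `lcp (x :: s) (y :: t)` is empty unless `x = y`, when it is `x :: lcp s t`. Hence
`#T (n+1) = 1 + q · #T n` and `S (n+1) = q · (S n + (#T n)²)`, and for `q = 2` these recursions are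
solved by `#T n = 2^(n+1) - 1` and `S n = 4·4^n − (4n+2)·2^n − 2`.
-/

open Finset

theorem length_lcp_cons {α : Type*} [DecidableEq α] (x y : α) (s t : List α) :
    (lcp (x :: s) (y :: t)).length = if x = y then (lcp s t).length + 1 else 0 := by
  rw [lcp]; split_ifs <;> rfl

section ListsLengthLE

variable {α : Type*} [Fintype α] [DecidableEq α]

variable (α) in
def listsLengthLE : ℕ → Finset (List α)
  | 0 => {[]}
  | n + 1 => insert [] ((univ ×ˢ listsLengthLE n).image fun p => p.1 :: p.2)

theorem mem_listsLengthLE {n : ℕ} {l : List α} : l ∈ listsLengthLE α n ↔ l.length ≤ n := by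
  induction n generalizing l with
  | zero => simp [listsLengthLE]
  | succ n ih => cases l <;> simp [listsLengthLE, ih]

theorem sum_listsLengthLE_succ {M : Type*} [AddCommMonoid M] (n : ℕ) (f : List α → M) :
    ∑ l ∈ listsLengthLE α (n + 1), f l = f [] + ∑ x, ∑ l ∈ listsLengthLE α n, f (x :: l) := by
  rw [listsLengthLE, sum_insert (by simp), sum_image (by simp), sum_product]

theorem card_listsLengthLE_succ (n : ℕ) :
    #(listsLengthLE α (n + 1)) = 1 + Fintype.card α * #(listsLengthLE α n) := by
  rw [card_eq_sum_ones, card_eq_sum_ones, sum_listsLengthLE_succ]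
  simp [mul_comm]

theorem sum_length_lcp_listsLengthLE_succ (n : ℕ) :
    ∑ a ∈ listsLengthLE α (n + 1), ∑ b ∈ listsLengthLE α (n + 1), (lcp a b).length =
      Fintype.card α * (∑ a ∈ listsLengthLE α n, ∑ b ∈ listsLengthLE α n, (lcp a b).length
        + #(listsLengthLE α n) ^ 2) := by
  simp only [sum_listsLengthLE_succ, length_lcp_cons]
  simp [lcp, sum_add_distrib, sq]

end ListsLengthLE

theorem card_listsLengthLE_fin_two (n : ℕ) :
    (#(listsLengthLE (Fin 2) n) : ℤ) = 2 ^ (n + 1) - 1 := by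
  induction n with
  | zero => rfl
  | succ n ih =>
    rw [card_listsLengthLE_succ, Fintype.card_fin]
    push_cast
    rw [ih]
    ring

theorem sum_length_lcp_listsLengthLE_fin_two (n : ℕ) :
    ((∑ a ∈ listsLengthLE (Fin 2) n, ∑ b ∈ listsLengthLE (Fin 2) n, (lcp a b).length : ℕ) : ℤ) =
      4 * 2 ^ (2 * n) - (4 * (n : ℤ) + 2) * 2 ^ n - 2 := by
  induction n with
  | zero => rfl
  | succ n ih =>
    rw [sum_length_lcp_listsLengthLE_succ, Fintype.card_fin]
    push_cast at ih ⊢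
    rw [ih, card_listsLengthLE_fin_two]
    ring

theorem stmt_7_general (n : ℕ)
    (L : Finset (List (Fin 2))) (hL : ∀ l : List (Fin 2), l ∈ L ↔ l.length ≤ n)
    (S : ℕ) (hS : S = ∑ a ∈ L, ∑ b ∈ L, (lcp a b).length) :
    (S : ℤ) = 4 * 2 ^ (2 * n) - (4 * (n : ℤ) + 2) * 2 ^ n - 2 := by
  obtain rfl : L = listsLengthLE (Fin 2) n := ext fun l => by rw [hL, mem_listsLengthLE]
  rw [hS, sum_length_lcp_listsLengthLE_fin_two]

/-- For an integer `n ≥ 1`, the sum `S_{2,n}` over all ordered pairs `(a, b)` of lists over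
`Fin 2` of length at most `n` of the length of the longest common prefix of `a` and `b`
satisfies `S_{2,n} = 4·2^{2n} − (4n+2)·2ⁿ − 2` (the integer sequence A286778). -/
theorem stmt_7 (n : ℕ) (hn : 1 ≤ n)
    (L : Finset (List (Fin 2))) (hL : ∀ l : List (Fin 2), l ∈ L ↔ l.length ≤ n)
    (S : ℕ) (hS : S = ∑ a ∈ L, ∑ b ∈ L, (lcp a b).length) :
    (S : ℤ) = 4 * 2 ^ (2 * n) - (4 * (n : ℤ) + 2) * 2 ^ n - 2 :=
  stmt_7_general n L hL S hS
end

section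
/- Let m ≥ 2 and n ≥ 1 be integers and let z be a complex number satisfying z^n·(m − z) = m − 1. Then |z| < m (the absolute value of z is strictly less than m). -/
/-!
For `z ≠ 1`, multiplying by `z - 1` turns `zⁿ (m - z) = m - 1` into
`zⁿ = (m - 1)(1 + z + ⋯ + zⁿ⁻¹)`. If `r = |z| ≥ m`, the triangle inequality then gives
`rⁿ ≤ (m - 1)(1 + r + ⋯ + rⁿ⁻¹) ≤ (r - 1)(1 + r + ⋯ + rⁿ⁻¹) = rⁿ - 1`, which is absurd.
-/

open Finset

theorem pow_mul_sub_eq_sub_one_iff_pow_eq_mul_geom_sum {R : Type*} [CommRing R] [IsDomain R]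
    {z : R} (hz : z ≠ 1) (a : R) (n : ℕ) :
    z ^ n * (a - z) = a - 1 ↔ z ^ n = (a - 1) * ∑ j ∈ range n, z ^ j := by
  have key :
      (z ^ n - (a - 1) * ∑ j ∈ range n, z ^ j) * (z - 1) = (a - 1) - z ^ n * (a - z) := by
    linear_combination (1 - a) * geom_sum_mul z n
  rw [← sub_eq_zero, ← neg_sub, neg_eq_zero, ← key, mul_eq_zero, sub_eq_zero (a := z),
    or_iff_left hz, sub_eq_zero]

/-- A Cauchy-type root bound for `xⁿ - c (1 + x + ⋯ + xⁿ⁻¹)`. -/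
theorem norm_lt_norm_add_one_of_pow_eq_mul_geom_sum {𝕜 : Type*} [NormedDivisionRing 𝕜]
    {z c : 𝕜} {n : ℕ} (h : z ^ n = c * ∑ j ∈ range n, z ^ j) : ‖z‖ < ‖c‖ + 1 := by
  by_contra! hz
  set r := ‖z‖
  have hsum : ‖∑ j ∈ range n, z ^ j‖ ≤ ∑ j ∈ range n, r ^ j :=
    (norm_sum_le _ _).trans_eq (by simp only [norm_pow, r])
  have hle : r ^ n ≤ ‖c‖ * ∑ j ∈ range n, r ^ j :=
    calc r ^ n = ‖c * ∑ j ∈ range n, z ^ j‖ := by rw [← h, norm_pow]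
      _ ≤ ‖c‖ * ∑ j ∈ range n, r ^ j := (norm_mul_le _ _).trans (by gcongr)
  have hle' : ‖c‖ * ∑ j ∈ range n, r ^ j ≤ (r - 1) * ∑ j ∈ range n, r ^ j := by
    gcongr
    linarith
  linarith [geom_sum_mul r n, mul_comm (r - 1) (∑ j ∈ range n, r ^ j)]

theorem stmt_12_general (m n : ℕ) (hm : 2 ≤ m) (z : ℂ)
    (hz : z ^ n * ((m : ℂ) - z) = (m : ℂ) - 1) :
    ‖z‖ < m := by
  have hm1 : (1 : ℝ) < m := by exact_mod_cast hm
  rcases eq_or_ne z 1 with rfl | hz1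
  · simpa using hm1
  have hnorm : ‖(m : ℂ) - 1‖ = m - 1 := by
    rw [← Nat.cast_pred (by omega), Complex.norm_natCast, Nat.cast_pred (by omega)]
  have hroot := norm_lt_norm_add_one_of_pow_eq_mul_geom_sum
    ((pow_mul_sub_eq_sub_one_iff_pow_eq_mul_geom_sum hz1 _ n).1 hz)
  rwa [hnorm, sub_add_cancel] at hroot

/-- For integers `m ≥ 2`, `n ≥ 1`, every complex number `z` with `zⁿ·(m − z) = m − 1`
satisfies `|z| < m`. -/
theorem stmt_12 (m n : ℕ) (hm : 2 ≤ m) (hn : 1 ≤ n) (z : ℂ)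
    (hz : z ^ n * ((m : ℂ) - z) = (m : ℂ) - 1) :
    ‖z‖ < m :=
  stmt_12_general m n hm z hz
end

section
/- Let m ≥ 2 and n ≥ 1 be integers, let A be the (n+1)×(n+1) complex matrix with A 0 j = m−1 for 0 ≤ j ≤ n−1, A 0 n = 0, and for 1 ≤ i ≤ n: A i j = 1 if j = i−1 and 0 otherwise, and let W = (1/m)·A. Then the spectral radius of W is strictly less than 1. -/
/-!
If `W v = μ v` with `‖μ‖ ≥ 1` and `v ≠ 0`, the subdiagonal rows `μ v_{k+1} = v_k / m` give
`‖v_j‖ ≤ m⁻ʲ ‖v_0‖`; the first row then gives `‖v_0‖ ≤ (1 - m⁻¹) ∑_{j<n} m⁻ʲ ‖v_0‖ = (1 - m⁻ⁿ) ‖v_0‖`,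
so `v_0 = 0` and hence `v = 0`.
-/

open Finset Matrix

/-- The matrix `W = (1/m)·A` with `r = 1/m`: state `i` is the length of the current run of the
stopping letter, and the run is extended with probability `r` or reset with probability `1 - r`. -/
def runLengthMatrix (r : ℂ) (n : ℕ) : Matrix (Fin (n + 1)) (Fin (n + 1)) ℂ :=
  Matrix.of fun i j =>
    if (i : ℕ) = 0 then (if (j : ℕ) < n then 1 - r else 0)
    else if (j : ℕ) + 1 = i then r else 0

namespace runLengthMatrix

variable {n : ℕ}

lemma mulVec_zero (r : ℂ) (v : Fin (n + 1) → ℂ) :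
    (runLengthMatrix r n *ᵥ v) 0 = (1 - r) * ∑ j : Fin n, v j.castSucc := by
  simp [runLengthMatrix, Matrix.mulVec, dotProduct, Fin.sum_univ_castSucc, mul_sum]

lemma mulVec_succ (r : ℂ) (v : Fin (n + 1) → ℂ) (k : Fin n) :
    (runLengthMatrix r n *ᵥ v) k.succ = r * v k.castSucc := by
  simp only [runLengthMatrix, Matrix.mulVec, dotProduct, Matrix.of_apply, Fin.val_succ,
    Nat.succ_ne_zero, if_false, Nat.add_right_cancel_iff, ite_mul, zero_mul]
  refine (Fintype.sum_eq_single k.castSucc fun j hj => if_neg fun h => hj (Fin.ext h)).trans ?_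
  simp

end runLengthMatrix

section Chain

variable {𝕜 : Type*} [NormedField 𝕜] {n : ℕ} {μ r : 𝕜} {v : Fin (n + 1) → 𝕜}

lemma norm_le_pow_mul_norm_zero_of_chain (hμ : 1 ≤ ‖μ‖)
    (hsucc : ∀ k : Fin n, μ * v k.succ = r * v k.castSucc) (j : Fin (n + 1)) :
    ‖v j‖ ≤ ‖r‖ ^ (j : ℕ) * ‖v 0‖ := by
  induction j using Fin.induction with
  | zero => simp
  | succ k ih =>
    calc ‖v k.succ‖ ≤ ‖μ‖ * ‖v k.succ‖ := le_mul_of_one_le_left (norm_nonneg _) hμ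
      _ = ‖r‖ * ‖v k.castSucc‖ := by rw [← norm_mul, hsucc, norm_mul]
      _ ≤ ‖r‖ * (‖r‖ ^ (k : ℕ) * ‖v 0‖) := by gcongr; simpa using ih
      _ = ‖r‖ ^ ((k.succ : Fin (n + 1)) : ℕ) * ‖v 0‖ := by rw [Fin.val_succ, pow_succ]; ring

end Chain

lemma eq_zero_of_chain {n : ℕ} {r : ℝ} (hr0 : 0 < r) (hr1 : r ≤ 1) {μ : ℂ} (hμ : 1 ≤ ‖μ‖)
    {v : Fin (n + 1) → ℂ} (hzero : μ * v 0 = (1 - r) * ∑ j : Fin n, v j.castSucc)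
    (hsucc : ∀ k : Fin n, μ * v k.succ = r * v k.castSucc) : v = 0 := by
  have hdecay (j : Fin (n + 1)) : ‖v j‖ ≤ r ^ (j : ℕ) * ‖v 0‖ := by
    simpa [abs_of_pos hr0] using norm_le_pow_mul_norm_zero_of_chain hμ hsucc j
  have hnorm : ‖(1 - r : ℂ)‖ = 1 - r := by
    rw [← Complex.ofReal_one, ← Complex.ofReal_sub, Complex.norm_real, Real.norm_of_nonneg]
    linarith
  have hv0 : ‖v 0‖ ≤ (1 - r ^ n) * ‖v 0‖ :=
    calc ‖v 0‖ ≤ ‖μ‖ * ‖v 0‖ := le_mul_of_one_le_left (norm_nonneg _) hμ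
      _ = (1 - r) * ‖∑ j : Fin n, v j.castSucc‖ := by rw [← norm_mul, hzero, norm_mul, hnorm]
      _ ≤ (1 - r) * ∑ j : Fin n, r ^ (j : ℕ) * ‖v 0‖ := by
        gcongr
        exact (norm_sum_le _ _).trans (sum_le_sum fun j _ => hdecay _)
      _ = (1 - r ^ n) * ‖v 0‖ := by
        rw [← sum_mul, Fin.sum_univ_eq_sum_range (r ^ ·), ← mul_assoc, mul_neg_geom_sum]
  have hv0_eq : ‖v 0‖ = 0 :=
    le_antisymm (nonpos_of_mul_nonpos_right (by linarith) (pow_pos hr0 n)) (norm_nonneg _)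
  funext j
  simpa [hv0_eq] using hdecay j

lemma spectralRadius_runLengthMatrix_lt_one {r : ℝ} (hr0 : 0 < r) (hr1 : r ≤ 1) (n : ℕ) :
    spectralRadius ℂ (runLengthMatrix r n) < 1 := by
  -- some Banach algebra norm on matrices is needed for Gelfand theory; `spectralRadius` ignores it
  let := Matrix.linftyOpNormedRing (n := Fin (n + 1)) (α := ℂ)
  let := Matrix.linftyOpNormedAlgebra (n := Fin (n + 1)) (R := ℂ) (α := ℂ)
  refine mod_cast spectrum.spectralRadius_lt_of_forall_lt _ fun μ hμ => ?_
  rw [← Matrix.spectrum_toLin', ← Module.End.hasEigenvalue_iff_mem_spectrum] at hμ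
  obtain ⟨v, hv⟩ := hμ.exists_hasEigenvector
  have heig : runLengthMatrix r n *ᵥ v = μ • v := by
    rw [← Matrix.toLin'_apply]; exact hv.apply_eq_smul
  by_contra! hge
  refine hv.2 (eq_zero_of_chain hr0 hr1 (by exact_mod_cast hge) ?_ fun k => ?_)
  · rw [← runLengthMatrix.mulVec_zero, heig, Pi.smul_apply, smul_eq_mul]
  · rw [← runLengthMatrix.mulVec_succ, heig, Pi.smul_apply, smul_eq_mul]

theorem stmt_13_general (m n : ℕ) (hm : 2 ≤ m)
    (A W : Matrix (Fin (n + 1)) (Fin (n + 1)) ℂ)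
    (hA : ∀ i j : Fin (n + 1), A i j =
      if (i : ℕ) = 0 then (if (j : ℕ) < n then (m : ℂ) - 1 else 0)
      else (if (j : ℕ) + 1 = (i : ℕ) then 1 else 0))
    (hW : W = (1 / (m : ℂ)) • A) :
    spectralRadius ℂ W < 1 := by
  have hm1 : (1 : ℝ) ≤ m := by exact_mod_cast one_le_two.trans hm
  have hW' : W = runLengthMatrix ((m : ℝ)⁻¹ : ℝ) n := by
    have hm0 : (m : ℂ) ≠ 0 := by exact_mod_cast (zero_lt_two.trans_le hm).ne'
    ext i j
    rw [hW, Matrix.smul_apply, hA, runLengthMatrix, Matrix.of_apply, smul_eq_mul]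
    split_ifs <;> push_cast <;> simp [field]
  rw [hW']
  exact spectralRadius_runLengthMatrix_lt_one (by positivity) (inv_le_one_of_one_le₀ hm1) n

/-- For integers `m ≥ 2`, `n ≥ 1`, with `A` the `(n+1)×(n+1)` complex matrix whose first row is
`(m-1, …, m-1, 0)` and whose row `i ≥ 1` has a single `1` in column `i-1`, and `W = (1/m)·A`,
the spectral radius of `W` is strictly less than `1`. -/
theorem stmt_13 (m n : ℕ) (hm : 2 ≤ m) (hn : 1 ≤ n)
    (A W : Matrix (Fin (n + 1)) (Fin (n + 1)) ℂ)
    (hA : ∀ i j : Fin (n + 1), A i j =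
      if (i : ℕ) = 0 then (if (j : ℕ) < n then (m : ℂ) - 1 else 0)
      else (if (j : ℕ) + 1 = (i : ℕ) then 1 else 0))
    (hW : W = (1 / (m : ℂ)) • A) :
    spectralRadius ℂ W < 1 :=
  stmt_13_general m n hm A W hA hW
end

section
/- Let m ≥ 2 and n ≥ 1 be integers and let W = (1/m)·A, where A is the (n+1)×(n+1) real matrix with A 0 j = m−1 for 0 ≤ j ≤ n−1, A 0 n = 0, and for 1 ≤ i ≤ n: A i j = 1 if j = i−1 and 0 otherwise. Then the matrix I − W is invertible, and its inverse has entries ((I − W)⁻¹)_{i,j} = m^{n−i} when j ≤ i and ((I − W)⁻¹)_{i,j} = m^{n−i} − m^{j−i} when j > i, for all 0 ≤ i, j ≤ n. -/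
/-! Let `B` be the claimed inverse; it suffices to check `B (I - W) = I`, i.e. `B A = m (B - I)`.
Right multiplication by `A` turns column `k < n` of `B` into `(m - 1)` times column `0` plus
column `k + 1`, and column `n` into `0`. Since row `i` of `B` is the constant `m^(n-i)`, minus
`m^(j-i)` in the columns `j > i`, what remains is a check of the three cases `k < i`, `k = i`,
`k > i`. -/

namespace Matrix

variable {K : Type*} [Field K] {n : ℕ}

/-- The Leslie matrix with fecundities `c` (its first row) and all survival rates `1`. -/
def leslie (c : Fin (n + 1) → K) : Matrix (Fin (n + 1)) (Fin (n + 1)) K :=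
  of fun i j => if (i : ℕ) = 0 then c j else if (j : ℕ) + 1 = i then 1 else 0

theorem mul_leslie_apply_castSucc (M : Matrix (Fin (n + 1)) (Fin (n + 1)) K)
    (c : Fin (n + 1) → K) (i : Fin (n + 1)) (k : Fin n) :
    (M * leslie c) i k.castSucc = M i 0 * c k.castSucc + M i k.succ := by
  simp [mul_apply, Fin.sum_univ_succ, leslie, ← Fin.ext_iff]

theorem mul_leslie_apply_last (M : Matrix (Fin (n + 1)) (Fin (n + 1)) K)
    (c : Fin (n + 1) → K) (i : Fin (n + 1)) :
    (M * leslie c) i (Fin.last n) = M i 0 * c (Fin.last n) := by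
  simpa [mul_apply, Fin.sum_univ_succ, leslie] using
    Finset.sum_eq_zero fun (x : Fin n) _ => if_neg (t := M i x.succ) x.isLt.ne'

def leslieFundamental (q : K) (n : ℕ) : Matrix (Fin (n + 1)) (Fin (n + 1)) K :=
  of fun i j => if (j : ℕ) ≤ i then q ^ (n - i) else q ^ (n - i) - q ^ ((j : ℕ) - i)

theorem leslieFundamental_mul_leslie (q : K) :
    leslieFundamental q n * leslie (fun j => if (j : ℕ) < n then q - 1 else 0) =
      q • (leslieFundamental q n - 1) := by
  ext i k
  induction k using Fin.lastCases with
  | last =>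
    rw [mul_leslie_apply_last]
    rcases i.le_last.lt_or_eq with hi | rfl
    · simp [leslieFundamental, hi.ne]
    · simp [leslieFundamental]
  | cast k =>
    rw [mul_leslie_apply_castSucc]
    simp only [leslieFundamental, of_apply, Fin.val_castSucc, Fin.val_succ, Fin.val_zero, k.isLt,
      zero_le, if_true, smul_apply, sub_apply, one_apply, Fin.ext_iff, smul_eq_mul]
    rcases lt_trichotomy (k : ℕ) i with h | h | h
    · rw [if_pos (Nat.succ_le_of_lt h), if_pos h.le, if_neg h.ne']
      ring
    · rw [if_neg (by omega), if_pos h.le, if_pos h.symm, h, Nat.add_sub_cancel_left]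
      ring
    · rw [if_neg (by omega), if_neg h.not_ge, if_neg h.ne, Nat.sub_add_comm h.le, pow_succ]
      ring

theorem leslieFundamental_mul_one_sub_smul_leslie {q : K} (hq : q ≠ 0) :
    leslieFundamental q n *
        (1 - q⁻¹ • leslie (fun j => if (j : ℕ) < n then q - 1 else 0)) = 1 := by
  rw [mul_sub, mul_one, mul_smul_comm, leslieFundamental_mul_leslie, smul_smul,
    inv_mul_cancel₀ hq, one_smul, sub_sub_cancel]

end Matrix

open Matrix

theorem stmt_14_general (m n : ℕ) (hm : 2 ≤ m)
    (A W : Matrix (Fin (n + 1)) (Fin (n + 1)) ℝ)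
    (hA : ∀ i j : Fin (n + 1), A i j =
      if (i : ℕ) = 0 then (if (j : ℕ) < n then (m : ℝ) - 1 else 0)
      else (if (j : ℕ) + 1 = (i : ℕ) then 1 else 0))
    (hW : W = (1 / (m : ℝ)) • A) :
    IsUnit (1 - W) ∧
      ∀ i j : Fin (n + 1), (1 - W)⁻¹ i j =
        if (j : ℕ) ≤ (i : ℕ) then (m : ℝ) ^ (n - (i : ℕ))
        else (m : ℝ) ^ (n - (i : ℕ)) - (m : ℝ) ^ ((j : ℕ) - (i : ℕ)) := by
  have hA_leslie : A = leslie fun j => if (j : ℕ) < n then (m : ℝ) - 1 else 0 := by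
    ext i j
    exact hA i j
  have h_left_inv : leslieFundamental (m : ℝ) n * (1 - W) = 1 := by
    rw [hW, one_div, hA_leslie]
    exact leslieFundamental_mul_one_sub_smul_leslie (Nat.cast_ne_zero.mpr (by omega))
  refine ⟨(isUnit_iff_isUnit_det _).mpr (isUnit_det_of_left_inverse h_left_inv), fun i j => ?_⟩
  rw [inv_eq_left_inv h_left_inv]
  rfl

/-- For integers `m ≥ 2`, `n ≥ 1`, with `A` the `(n+1)×(n+1)` real matrix whose first row is
`(m-1, …, m-1, 0)` and whose row `i ≥ 1` has a single `1` in column `i-1`, and `W = (1/m)·A`,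
the matrix `I − W` is invertible and `((I − W)⁻¹)_{i,j} = m^{n−i}` for `j ≤ i`, and
`((I − W)⁻¹)_{i,j} = m^{n−i} − m^{j−i}` for `j > i`. -/
theorem stmt_14 (m n : ℕ) (hm : 2 ≤ m) (hn : 1 ≤ n)
    (A W : Matrix (Fin (n + 1)) (Fin (n + 1)) ℝ)
    (hA : ∀ i j : Fin (n + 1), A i j =
      if (i : ℕ) = 0 then (if (j : ℕ) < n then (m : ℝ) - 1 else 0)
      else (if (j : ℕ) + 1 = (i : ℕ) then 1 else 0))
    (hW : W = (1 / (m : ℝ)) • A) :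
    IsUnit (1 - W) ∧
      ∀ i j : Fin (n + 1), (1 - W)⁻¹ i j =
        if (j : ℕ) ≤ (i : ℕ) then (m : ℝ) ^ (n - (i : ℕ))
        else (m : ℝ) ^ (n - (i : ℕ)) - (m : ℝ) ^ ((j : ℕ) - (i : ℕ)) :=
  stmt_14_general m n hm A W hA hW
end

section
/- Let m ≥ 2 and n ≥ 1 be integers and let W = (1/m)·A, where A is the (n+1)×(n+1) real matrix with A 0 j = m−1 for 0 ≤ j ≤ n−1, A 0 n = 0, and for 1 ≤ i ≤ n: A i j = 1 if j = i−1 and 0 otherwise. Then the bottom-left entry of W·(I + W)·((I − W)⁻¹)³ equals (m/(m−1)²)·(2·m^{2n+1} − (2n+3)·m^{n+1} + (2n+1)·m^n + m − 1). -/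
/-!
Every column of `W` but the last sums to `1`, so `1ᵀ (1 - W) = e_lastᵀ`: the last row of
`N = (1 - W)⁻¹` consists of ones, i.e. `(N y)_last = ∑ y`. As `W N = N - 1`, the matrix is
`2 N³ - 3 N² + N`, whose entry is therefore `2 ∑ (N² e₀) - 3 ∑ (N e₀) + 1`. Away from row `0`,
`(1 - W) x = y` is the recurrence `x (i + 1) = y (i + 1) + x i / m`, which gives
`N e₀ = (m ^ (n - i))ᵢ` and `N² e₀ = (m ^ (n - i) * (∑ₖ mᵏ - (n - i)))ᵢ`.
-/

open Matrix Finset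

lemma mul_one_add_mul_pow_three_of_one_sub_mul_eq_one {R : Type*} [Ring R] {w c : R}
    (h : (1 - w) * c = 1) : w * (1 + w) * c ^ 3 = 2 • c ^ 3 - 3 • c ^ 2 + c := by
  have h2 : (1 - w) * c ^ 3 = c ^ 2 := by rw [pow_succ' c 2, ← mul_assoc, h, one_mul]
  have h1 : (1 - w) * c ^ 2 = c := by rw [sq, ← mul_assoc, h, one_mul]
  calc w * (1 + w) * c ^ 3
      = 2 • c ^ 3 - 3 • ((1 - w) * c ^ 3) + (1 - w) * ((1 - w) * c ^ 3) := by noncomm_ring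
    _ = 2 • c ^ 3 - 3 • c ^ 2 + c := by rw [h2, h1]

lemma sum_range_mul_pow_mul_sub_one_sq {R : Type*} [CommRing R] (x : R) (n : ℕ) :
    (∑ k ∈ range (n + 1), (k : R) * x ^ k) * (x - 1) ^ 2
      = x * (n * x ^ (n + 1) - (n + 1) * x ^ n + 1) := by
  induction n with
  | zero => simp
  | succ n ih =>
    rw [sum_range_succ, add_mul, ih]
    push_cast
    ring

namespace RunLength

noncomputable def transitionMatrix (n : ℕ) (m : ℝ) : Matrix (Fin (n + 1)) (Fin (n + 1)) ℝ :=
  Matrix.of fun i j =>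
    if (i : ℕ) = 0 then (if (j : ℕ) < n then (m - 1) / m else 0)
    else (if (j : ℕ) + 1 = (i : ℕ) then 1 / m else 0)

variable {n : ℕ} {m : ℝ}

lemma transitionMatrix_mulVec_zero (x : Fin (n + 1) → ℝ) :
    (transitionMatrix n m *ᵥ x) 0 = (m - 1) / m * ∑ j : Fin n, x j.castSucc := by
  simp [transitionMatrix, mulVec, dotProduct, Fin.sum_univ_castSucc, mul_sum]

lemma transitionMatrix_mulVec_succ (x : Fin (n + 1) → ℝ) (j : Fin n) :
    (transitionMatrix n m *ᵥ x) j.succ = x j.castSucc / m := by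
  simp [transitionMatrix, mulVec, dotProduct, Fin.sum_univ_castSucc, Fin.val_inj, j.isLt.ne',
    div_eq_inv_mul]

lemma one_sub_transitionMatrix_mulVec_succ (x : Fin (n + 1) → ℝ) (j : Fin n) :
    ((1 - transitionMatrix n m) *ᵥ x) j.succ = x j.succ - x j.castSucc / m := by
  rw [sub_mulVec, one_mulVec, Pi.sub_apply, transitionMatrix_mulVec_succ]

lemma sum_one_sub_transitionMatrix_mulVec (hm : m ≠ 0) (x : Fin (n + 1) → ℝ) :
    ∑ i, ((1 - transitionMatrix n m) *ᵥ x) i = x (Fin.last n) := by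
  have hcol : ∑ i, (transitionMatrix n m *ᵥ x) i = ∑ j : Fin n, x j.castSucc := by
    simp only [Fin.sum_univ_succ, transitionMatrix_mulVec_zero, transitionMatrix_mulVec_succ,
      ← sum_div]
    field_simp
    ring
  rw [sub_mulVec, one_mulVec]
  simp only [Pi.sub_apply, sum_sub_distrib, hcol, Fin.sum_univ_castSucc x]
  ring

lemma isUnit_det_one_sub_transitionMatrix (hm : m ≠ 0) :
    IsUnit (1 - transitionMatrix n m).det := by
  rw [isUnit_iff_ne_zero]
  intro hdet
  -- a kernel vector vanishes at `last` by the column sums, then backwards by the recurrence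
  obtain ⟨v, hv, hker⟩ := exists_mulVec_eq_zero_iff.mpr hdet
  refine hv (funext fun i => Fin.reverseInduction ?_ (fun j hj => ?_) i)
  · simpa [hker] using (sum_one_sub_transitionMatrix_mulVec hm v).symm
  · have := one_sub_transitionMatrix_mulVec_succ (m := m) v j
    rw [hker, hj] at this
    simpa [hm] using this

lemma inv_one_sub_transitionMatrix_mulVec_eq (hm : m ≠ 0) {x y : Fin (n + 1) → ℝ}
    (hrec : ∀ j : Fin n, x j.succ = y j.succ + x j.castSucc / m)
    (hlast : x (Fin.last n) = ∑ i, y i) :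
    (1 - transitionMatrix n m)⁻¹ *ᵥ y = x := by
  suffices hsolve : (1 - transitionMatrix n m) *ᵥ x = y by
    rw [← hsolve, mulVec_mulVec, nonsing_inv_mul _ (isUnit_det_one_sub_transitionMatrix hm),
      one_mulVec]
  have hsucc (j : Fin n) : ((1 - transitionMatrix n m) *ᵥ x) j.succ = y j.succ := by
    rw [one_sub_transitionMatrix_mulVec_succ, hrec]
    ring
  have hsum := sum_one_sub_transitionMatrix_mulVec hm x
  rw [hlast, Fin.sum_univ_succ, Fin.sum_univ_succ y, Finset.sum_congr rfl fun j _ => hsucc j,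
    add_left_inj] at hsum
  funext i
  exact Fin.cases hsum hsucc i

lemma inv_one_sub_transitionMatrix_mul_apply_last (hm : m ≠ 0)
    (M : Matrix (Fin (n + 1)) (Fin (n + 1)) ℝ) (j : Fin (n + 1)) :
    ((1 - transitionMatrix n m)⁻¹ * M) (Fin.last n) j = ∑ i, M i j := by
  calc ((1 - transitionMatrix n m)⁻¹ * M) (Fin.last n) j
      = ((1 - transitionMatrix n m)⁻¹ *ᵥ M.col j) (Fin.last n) := rfl
    _ = ∑ i, ((1 - transitionMatrix n m) *ᵥ ((1 - transitionMatrix n m)⁻¹ *ᵥ M.col j)) i :=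
      (sum_one_sub_transitionMatrix_mulVec hm _).symm
    _ = ∑ i, M i j := by
      rw [mulVec_mulVec, mul_nonsing_inv _ (isUnit_det_one_sub_transitionMatrix hm), one_mulVec]
      rfl

lemma inv_one_sub_transitionMatrix_apply_zero (hm : m ≠ 0) (i : Fin (n + 1)) :
    (1 - transitionMatrix n m)⁻¹ i 0 = m ^ (i.rev : ℕ) := by
  have hcol := inv_one_sub_transitionMatrix_mulVec_eq (n := n) hm
    (x := fun i => m ^ (i.rev : ℕ)) (y := Pi.single 0 1) ?_ ?_
  · rw [mulVec_single_one] at hcol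
    exact congrFun hcol i
  · intro j
    simp [Fin.rev_succ, Fin.rev_castSucc, pow_succ, hm]
  · simp

lemma sum_rev_eq_sum_range (f : ℕ → ℝ) :
    ∑ i : Fin (n + 1), f i.rev = ∑ k ∈ range (n + 1), f k := by
  rw [← Fin.sum_univ_eq_sum_range]
  exact Equiv.sum_comp Fin.revPerm (fun i : Fin (n + 1) => f i)

lemma inv_one_sub_transitionMatrix_sq_apply_zero (hm : m ≠ 0) (i : Fin (n + 1)) :
    ((1 - transitionMatrix n m)⁻¹ * (1 - transitionMatrix n m)⁻¹) i 0
      = m ^ (i.rev : ℕ) * (∑ k ∈ range (n + 1), m ^ k - i.rev) := by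
  have hcol := inv_one_sub_transitionMatrix_mulVec_eq (n := n) hm
    (x := fun i => m ^ (i.rev : ℕ) * (∑ k ∈ range (n + 1), m ^ k - i.rev))
    (y := fun i => m ^ (i.rev : ℕ)) ?_ ?_
  · rw [← congrFun hcol i]
    simp only [mul_apply, mulVec, dotProduct, inv_one_sub_transitionMatrix_apply_zero hm]
  · intro j
    simp only [Fin.rev_succ, Fin.rev_castSucc, Fin.val_succ, Fin.val_castSucc]
    field_simp
    push_cast
    ring
  · simp only [Fin.rev_last, Fin.val_zero, pow_zero, one_mul, Nat.cast_zero, sub_zero]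
    exact (sum_rev_eq_sum_range (m ^ ·)).symm

lemma transitionMatrix_mul_one_add_mul_inv_pow_three_apply_last_zero (hm : m ≠ 0) :
    (transitionMatrix n m * (1 + transitionMatrix n m) * ((1 - transitionMatrix n m)⁻¹) ^ 3 :
        Matrix (Fin (n + 1)) (Fin (n + 1)) ℝ) (Fin.last n) 0
      = 2 * ((∑ k ∈ range (n + 1), m ^ k) ^ 2 - ∑ k ∈ range (n + 1), (k : ℝ) * m ^ k)
        - 3 * ∑ k ∈ range (n + 1), m ^ k + 1 := by
  have hunit := isUnit_det_one_sub_transitionMatrix (n := n) hm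
  have h1 : (1 - transitionMatrix n m)⁻¹ (Fin.last n) 0 = 1 := by
    simp [inv_one_sub_transitionMatrix_apply_zero hm]
  have h2 : ((1 - transitionMatrix n m)⁻¹ ^ 2 : Matrix (Fin (n + 1)) (Fin (n + 1)) ℝ)
      (Fin.last n) 0 = ∑ k ∈ range (n + 1), m ^ k := by
    simp only [sq, inv_one_sub_transitionMatrix_mul_apply_last hm,
      inv_one_sub_transitionMatrix_apply_zero hm]
    exact sum_rev_eq_sum_range (m ^ ·)
  have h3 : ((1 - transitionMatrix n m)⁻¹ ^ 3 : Matrix (Fin (n + 1)) (Fin (n + 1)) ℝ)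
      (Fin.last n) 0
      = (∑ k ∈ range (n + 1), m ^ k) ^ 2 - ∑ k ∈ range (n + 1), (k : ℝ) * m ^ k := by
    rw [pow_succ', sq, inv_one_sub_transitionMatrix_mul_apply_last hm]
    simp only [inv_one_sub_transitionMatrix_sq_apply_zero hm]
    rw [sum_rev_eq_sum_range (fun k => m ^ k * (∑ k ∈ range (n + 1), m ^ k - k))]
    simp only [mul_sub, sum_sub_distrib, ← sum_mul, sq, mul_comm]
  rw [mul_one_add_mul_pow_three_of_one_sub_mul_eq_one (mul_nonsing_inv _ hunit)]
  rw [Matrix.add_apply, Matrix.sub_apply, Matrix.smul_apply, Matrix.smul_apply, h1, h2, h3,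
    nsmul_eq_mul, nsmul_eq_mul]
  push_cast
  ring

lemma geom_sum_combination_eq (hm : m ≠ 1) :
    2 * ((∑ k ∈ range (n + 1), m ^ k) ^ 2 - ∑ k ∈ range (n + 1), (k : ℝ) * m ^ k)
        - 3 * ∑ k ∈ range (n + 1), m ^ k + 1
      = m / (m - 1) ^ 2 * (2 * m ^ (2 * n + 1) - (2 * (n : ℝ) + 3) * m ^ (n + 1)
          + (2 * (n : ℝ) + 1) * m ^ n + m - 1) := by
  have hm1 : m - 1 ≠ 0 := sub_ne_zero.mpr hm
  have hgeom := geom_sum_mul m (n + 1)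
  have harith := sum_range_mul_pow_mul_sub_one_sq m n
  set S := ∑ k ∈ range (n + 1), m ^ k
  rw [div_mul_eq_mul_div, eq_div_iff (pow_ne_zero 2 hm1)]
  linear_combination (2 * (S * (m - 1) + m ^ (n + 1) - 1) - 3 * (m - 1)) * hgeom - 2 * harith

end RunLength

open RunLength in
theorem stmt_16_general (m n : ℕ) (hm : 2 ≤ m)
    (A W : Matrix (Fin (n + 1)) (Fin (n + 1)) ℝ)
    (hA : ∀ i j : Fin (n + 1), A i j =
      if (i : ℕ) = 0 then (if (j : ℕ) < n then (m : ℝ) - 1 else 0)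
      else (if (j : ℕ) + 1 = (i : ℕ) then 1 else 0))
    (hW : W = (1 / (m : ℝ)) • A) :
    ((W * (1 + W) * ((1 - W)⁻¹) ^ 3 : Matrix (Fin (n + 1)) (Fin (n + 1)) ℝ)) (Fin.last n) 0
      = (m : ℝ) / ((m : ℝ) - 1) ^ 2 *
          (2 * (m : ℝ) ^ (2 * n + 1) - (2 * (n : ℝ) + 3) * (m : ℝ) ^ (n + 1)
            + (2 * (n : ℝ) + 1) * (m : ℝ) ^ n + (m : ℝ) - 1) := by
  have hm0 : (m : ℝ) ≠ 0 := by positivity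
  have hm1 : (m : ℝ) ≠ 1 := by norm_cast; omega
  have hWm : W = transitionMatrix n m := by
    ext i j
    rw [hW, Matrix.smul_apply, hA, transitionMatrix, of_apply, smul_eq_mul]
    split_ifs <;> ring
  rw [hWm, transitionMatrix_mul_one_add_mul_inv_pow_three_apply_last_zero hm0,
    geom_sum_combination_eq hm1]

/-- For integers `m ≥ 2`, `n ≥ 1`, with `A` the `(n+1)×(n+1)` real matrix whose first row is
`(m-1, …, m-1, 0)` and whose row `i ≥ 1` has a single `1` in column `i-1`, and `W = (1/m)·A`,
the bottom-left entry of `W·(I + W)·((I − W)⁻¹)³` equals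
`(m/(m−1)²)·(2·m^{2n+1} − (2n+3)·m^{n+1} + (2n+1)·mⁿ + m − 1)`. -/
theorem stmt_16 (m n : ℕ) (hm : 2 ≤ m) (hn : 1 ≤ n)
    (A W : Matrix (Fin (n + 1)) (Fin (n + 1)) ℝ)
    (hA : ∀ i j : Fin (n + 1), A i j =
      if (i : ℕ) = 0 then (if (j : ℕ) < n then (m : ℝ) - 1 else 0)
      else (if (j : ℕ) + 1 = (i : ℕ) then 1 else 0))
    (hW : W = (1 / (m : ℝ)) • A) :
    ((W * (1 + W) * ((1 - W)⁻¹) ^ 3 : Matrix (Fin (n + 1)) (Fin (n + 1)) ℝ)) (Fin.last n) 0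
      = (m : ℝ) / ((m : ℝ) - 1) ^ 2 *
          (2 * (m : ℝ) ^ (2 * n + 1) - (2 * (n : ℝ) + 3) * (m : ℝ) ^ (n + 1)
            + (2 * (n : ℝ) + 1) * (m : ℝ) ^ n + (m : ℝ) - 1) :=
  stmt_16_general m n hm A W hA hW
end
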